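/- arXiv:1506.09015 — 5 statements merged into one kernel-verified Lean document; each statement's English description precedes it below -/
import Mathlib

section
/- Let X satisfy P(X = s·r^(k−1)) = p·q^(k−1) for k ≥ 1, with 0 < p < 1, q = 1 − p, s > 0, and r = 1/q. Then E[X·1{X ≤ x}] ∼ s·p·log_r(x/s) as x → ∞, i.e., the ratio of the two sides tends to 1. -/
/-! The masses `p q ^ k` sum to `1`, so almost surely `X` takes only the values `s r ^ k`; on
`{X ≤ x}` these are the ones with `k ≤ ⌊log_r (x / s)⌋`, and each value contributes
`p q ^ k · s r ^ k = s p` to the truncated mean, since `q r = 1`.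
Hence `E[X; X ≤ x] = s p (⌊log_r (x / s)⌋ + 1)`, and `(⌊t⌋ + 1) / t → 1`. -/

open MeasureTheory ProbabilityTheory Filter Topology Function

theorem tendsto_natFloor_add_one_div_atTop :
    Tendsto (fun t : ℝ => ((⌊t⌋₊ : ℝ) + 1) / t) atTop (𝓝 1) := by
  have h := tendsto_nat_floor_div_atTop.add (tendsto_inv_atTop_zero (𝕜 := ℝ))
  rw [add_zero] at h
  refine h.congr' ?_
  filter_upwards with t
  rw [add_div, one_div]

theorem tsum_ofReal_mul_one_sub_pow_eq_one {p : ℝ} (hp : 0 < p) (hp1 : p ≤ 1) :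
    ∑' k : ℕ, ENNReal.ofReal (p * (1 - p) ^ k) = 1 := by
  have hq0 : 0 ≤ 1 - p := by linarith
  have hq1 : 1 - p < 1 := by linarith
  rw [← ENNReal.ofReal_tsum_of_nonneg (fun k => by positivity)
    ((summable_geometric_of_lt_one hq0 hq1).mul_left p), tsum_mul_left,
    tsum_geometric_of_lt_one hq0 hq1, sub_sub_cancel, mul_inv_cancel₀ hp.ne', ENNReal.ofReal_one]

theorem mul_pow_le_iff_lt_natFloor_logb_add_one {r s x : ℝ} (hr : 1 < r) (hs : 0 < s)
    (hx : s ≤ x) (k : ℕ) : s * r ^ k ≤ x ↔ k < ⌊Real.logb r (x / s)⌋₊ + 1 := by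
  rw [Nat.lt_add_one_iff, Nat.le_floor_iff (Real.logb_nonneg hr ((one_le_div hs).2 hx)),
    Real.le_logb_iff_rpow_le hr (div_pos (hs.trans_le hx) hs), Real.rpow_natCast,
    le_div_iff₀ hs, mul_comm]

theorem pairwise_disjoint_setOf_eq {Ω ι β : Type*} {X : Ω → β} {v : ι → β} (hv : Injective v) :
    Pairwise (Disjoint on fun k => {ω | X ω = v k}) := fun _ _ hij =>
  Set.disjoint_left.2 fun _ hi hj => hij (hv (hi.symm.trans hj))

section CountablyValued

variable {Ω : Type*} [MeasurableSpace Ω] {μ : Measure Ω}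

theorem ae_mem_range_of_tsum_measure_eq_one {ι β : Type*} [Countable ι] [MeasurableSpace β]
    [MeasurableSingletonClass β] [IsProbabilityMeasure μ] {X : Ω → β} {v : ι → β}
    (hX : Measurable X) (hv : Injective v) (h : ∑' k, μ {ω | X ω = v k} = 1) :
    ∀ᵐ ω ∂μ, X ω ∈ Set.range v := by
  have hunion : {ω | X ω ∈ Set.range v} = ⋃ k, {ω | X ω = v k} := by
    ext ω
    simp [eq_comm]
  have hmeas : ∀ k, MeasurableSet {ω | X ω = v k} := fun k => hX (measurableSet_singleton _)
  rw [ae_iff_measure_eq (hunion ▸ (MeasurableSet.iUnion hmeas).nullMeasurableSet), hunion,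
    measure_iUnion (pairwise_disjoint_setOf_eq hv) hmeas, h, measure_univ]

theorem setIntegral_setOf_eq {X : Ω → ℝ} (hX : Measurable X) (c : ℝ) :
    ∫ ω in {ω | X ω = c}, X ω ∂μ = μ.real {ω | X ω = c} * c := by
  have hmeas : MeasurableSet {ω | X ω = c} := hX (measurableSet_singleton c)
  rw [setIntegral_congr_fun (g := fun _ => c) hmeas fun _ hω => hω,
    setIntegral_const, smul_eq_mul]

theorem setIntegral_le_eq_sum_of_ae_mem_range [IsFiniteMeasure μ] {X : Ω → ℝ} {v : ℕ → ℝ}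
    (hX : Measurable X) (hv : Injective v) (hae : ∀ᵐ ω ∂μ, X ω ∈ Set.range v) {x : ℝ} {n : ℕ}
    (hn : ∀ k, v k ≤ x ↔ k < n) :
    ∫ ω in {ω | X ω ≤ x}, X ω ∂μ = ∑ k ∈ Finset.range n, μ.real {ω | X ω = v k} * v k := by
  have hset : {ω | X ω ≤ x} =ᵐ[μ] ⋃ k ∈ Finset.range n, {ω | X ω = v k} := by
    rw [eventuallyEq_set]
    filter_upwards [hae] with ω ⟨k, hk⟩
    simp [← hk, hv.eq_iff, hn]
  have hmeas : ∀ k, MeasurableSet {ω | X ω = v k} := fun k => hX (measurableSet_singleton _)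
  have hint : ∀ k, IntegrableOn X {ω | X ω = v k} μ := fun k =>
    (integrableOn_congr_fun (g := fun _ => v k) (fun _ hω => hω) (hmeas k)).2
      (integrableOn_const (measure_ne_top _ _))
  rw [setIntegral_congr_set hset, integral_biUnion_finset _ (fun k _ => hmeas k)
    ((pairwise_disjoint_setOf_eq hv).set_pairwise _) (fun k _ => hint k)]
  exact Finset.sum_congr rfl fun k _ => setIntegral_setOf_eq hX (v k)

end CountablyValued

theorem petersburg_truncated_mean_asymptotics
    {Ω : Type*} [MeasureSpace Ω] [IsProbabilityMeasure (ℙ : Measure Ω)]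
    (X : Ω → ℝ) (hX : Measurable X) (p q s r : ℝ)
    (hp : 0 < p) (hp1 : p < 1) (hq : q = 1 - p) (hs : 0 < s) (hr : r = 1 / q)
    (hlaw : ∀ k : ℕ, ℙ {ω | X ω = s * r ^ k} = ENNReal.ofReal (p * q ^ k)) :
    Filter.Tendsto
      (fun x : ℝ => (∫ ω in {ω | X ω ≤ x}, X ω ∂ℙ) / (s * p * Real.logb r (x / s)))
      Filter.atTop (nhds 1) := by
  have hq0 : 0 < q := by linarith
  have hr1 : 1 < r := hr ▸ one_lt_one_div hq0 (by linarith)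
  have hv : StrictMono fun k : ℕ => s * r ^ k := fun _ _ hab =>
    mul_lt_mul_of_pos_left (pow_lt_pow_right₀ hr1 hab) hs
  have hae : ∀ᵐ ω ∂ℙ, X ω ∈ Set.range fun k : ℕ => s * r ^ k :=
    ae_mem_range_of_tsum_measure_eq_one hX hv.injective (by
      simp_rw [hlaw, hq]
      exact tsum_ofReal_mul_one_sub_pow_eq_one hp hp1.le)
  have hmass : ∀ k : ℕ, (ℙ : Measure Ω).real {ω | X ω = s * r ^ k} * (s * r ^ k) = s * p := by
    intro k
    rw [measureReal_def, hlaw, ENNReal.toReal_ofReal (by positivity), hr, one_div, inv_pow]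
    field_simp
  have htrunc : ∀ x, s ≤ x →
      ∫ ω in {ω | X ω ≤ x}, X ω ∂ℙ = s * p * ((⌊Real.logb r (x / s)⌋₊ : ℝ) + 1) := by
    intro x hx
    rw [setIntegral_le_eq_sum_of_ae_mem_range hX hv.injective hae
      (mul_pow_le_iff_lt_natFloor_logb_add_one hr1 hs hx)]
    simp only [hmass, Finset.sum_const, Finset.card_range, nsmul_eq_mul]
    push_cast
    ring
  have hlog : Tendsto (fun x => Real.logb r (x / s)) atTop atTop :=
    (Real.tendsto_logb_atTop hr1).comp (tendsto_id.atTop_div_const hs)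
  refine (tendsto_natFloor_add_one_div_atTop.comp hlog).congr' ?_
  filter_upwards [eventually_ge_atTop s] with x hx
  rw [Function.comp_apply, htrunc x hx, mul_div_mul_left _ _ (by positivity)]
end

section
/- Let X, X₁, X₂, … be i.i.d. with P(X = s·r^(k−1)) = p·q^(k−1) for k ≥ 1, where 0 < p < 1, q = 1 − p, s > 0, and r = 1/q. Let Sₙ = X₁ + ⋯ + Xₙ. Then Sₙ/(n·log_r n) converges in probability to s·p as n → ∞. -/
/-!
Feller's truncation method. Truncate the payoffs at level `r ^ m`, where
`r ^ m ≤ n log_r n < r ^ (m + 1)`. A payoff exceeds this level with probability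
`q ^ m < r / (n log_r n)`, so with probability tending to one none of the first `n` payoffs is
truncated. Every level `k < m` contributes `s r^k · p q^k = s p` to the mean of a truncated payoff,
which is therefore `m s p`, while its second moment is at most `s² p r^m / (r - 1)`. Since
`m ∼ log_r (n log_r n) ∼ log_r n`, Chebyshev's inequality shows that the truncated sum divided by
`n log_r n` concentrates at `s p`, with variance `O(1 / log_r n)`.
-/

open MeasureTheory ProbabilityTheory Filter Topology

section FiniteSupport

variable {Ω β E : Type*} [MeasurableSpace Ω] [MeasurableSpace β] [MeasurableSingletonClass β]
  [NormedAddCommGroup E] {μ : Measure Ω} [IsFiniteMeasure μ] {X : Ω → β}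

lemma integral_indicator_finset_comp [NormedSpace ℝ E] [CompleteSpace E] (hX : Measurable X)
    (F : Finset β) (g : β → E) :
    ∫ ω, (F : Set β).indicator g (X ω) ∂μ
      = ∑ x ∈ F, μ.real (X ⁻¹' {x}) • g x := by
  have hg : Integrable ((F : Set β).indicator g) (μ.map X) :=
    IntegrableOn.finset.integrable_indicator F.measurableSet
  rw [← integral_map hX.aemeasurable hg.aestronglyMeasurable, integral_indicator F.measurableSet,
    setIntegral_finset _ IntegrableOn.finset]
  simp only [map_measureReal_apply hX (measurableSet_singleton _)]

lemma memLp_indicator_finset_comp (hX : Measurable X) (F : Finset β) (g : β → E)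
    (p : ENNReal) : MemLp (fun ω => (F : Set β).indicator g (X ω)) p μ := by
  have hg : Integrable ((F : Set β).indicator g) (μ.map X) :=
    IntegrableOn.finset.integrable_indicator F.measurableSet
  refine .of_bound (hg.aestronglyMeasurable.comp_aemeasurable hX.aemeasurable)
    (∑ x ∈ F, ‖g x‖) (.of_forall fun ω => ?_)
  by_cases hω : X ω ∈ F
  · rw [Set.indicator_of_mem (by exact_mod_cast hω)]
    exact Finset.single_le_sum (fun x _ => norm_nonneg (g x)) hω
  · rw [Set.indicator_of_notMem (by exact_mod_cast hω), norm_zero]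
    positivity

end FiniteSupport

section Chebyshev

variable {Ω ι : Type*} [MeasurableSpace Ω] {μ : Measure Ω} [IsFiniteMeasure μ]

lemma measure_lt_abs_div_sub_le {T : Ω → ℝ} (hT : MemLp T 2 μ)
    {a b ε δ : ℝ} (hb : 0 < b) (hδ : 0 < δ) (hmean : |μ[T] / b - a| ≤ ε - δ) :
    μ {ω | ε < |T ω / b - a|} ≤ ENNReal.ofReal (variance T μ / (δ * b) ^ 2) := by
  refine (measure_mono fun ω hω => ?_).trans (meas_ge_le_variance_div_sq hT (by positivity))
  have hsplit : T ω / b - a = (T ω - μ[T]) / b + (μ[T] / b - a) := by field_simp; ring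
  have htri := abs_add_le ((T ω - μ[T]) / b) (μ[T] / b - a)
  rw [← hsplit, abs_div, abs_of_pos hb] at htri
  have : δ ≤ |T ω - μ[T]| / b := by linarith [show ε < |T ω / b - a| from hω]
  exact (le_div_iff₀ hb).1 this

/-- Feller's truncation inequality: outside the events `X i ≠ Y i`, Chebyshev's inequality
applies to the sum of the `Y i`. -/
lemma measure_lt_abs_sum_div_sub_le (S : Finset ι)
    {X Y : ι → Ω → ℝ} (hY : ∀ i, MemLp (Y i) 2 μ)
    (hindep : Pairwise fun i j => Y i ⟂ᵢ[μ] Y j) {a b ε δ : ℝ} (hb : 0 < b) (hδ : 0 < δ)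
    (hmean : |(∑ i ∈ S, μ[Y i]) / b - a| ≤ ε - δ) :
    μ {ω | ε < |(∑ i ∈ S, X i ω) / b - a|}
      ≤ ∑ i ∈ S, μ {ω | X i ω ≠ Y i ω}
        + ENNReal.ofReal ((∑ i ∈ S, variance (Y i) μ) / (δ * b) ^ 2) := by
  have hsub : {ω | ε < |(∑ i ∈ S, X i ω) / b - a|}
      ⊆ (⋃ i ∈ S, {ω | X i ω ≠ Y i ω})
        ∪ {ω | ε < |(∑ i ∈ S, Y i) ω / b - a|} := by
    intro ω hω
    by_cases hbad : ω ∈ ⋃ i ∈ S, {ω | X i ω ≠ Y i ω}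
    · exact .inl hbad
    · simp only [Set.mem_iUnion, Set.mem_ofPred_eq, not_exists, not_not] at hbad
      simpa [Finset.sum_congr rfl fun i hi => hbad i hi] using Or.inr hω
  refine (measure_mono hsub).trans <| (measure_union_le _ _).trans <|
    add_le_add (measure_biUnion_finset_le _ _) ?_
  rw [← IndepFun.variance_sum (fun i _ => hY i) fun i _ j _ hij => hindep hij]
  refine measure_lt_abs_div_sub_le (memLp_finsetSum' _ fun i _ => hY i) hb hδ ?_
  simp only [Finset.sum_apply]
  rwa [integral_finsetSum _ fun i _ => (hY i).integrable one_le_two]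

end Chebyshev

noncomputable def petersburgPayoffs (s r : ℝ) (m : ℕ) : Finset ℝ :=
  (Finset.range m).image fun k => s * r ^ k

noncomputable def petersburgTrunc (s r : ℝ) (m : ℕ) : ℝ → ℝ :=
  (petersburgPayoffs s r m : Set ℝ).indicator id

section Petersburg

variable {Ω : Type*} [MeasurableSpace Ω] {μ : Measure Ω} [IsProbabilityMeasure μ]
  {X : Ω → ℝ} {p q s r : ℝ}

lemma sum_petersburgPayoffs {M : Type*} [AddCommMonoid M] (hs : s ≠ 0) (hr : 1 < r) (m : ℕ)
    (f : ℝ → M) :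
    ∑ x ∈ petersburgPayoffs s r m, f x = ∑ k ∈ Finset.range m, f (s * r ^ k) :=
  Finset.sum_image fun _ _ _ _ h =>
    pow_right_injective₀ (by linarith) hr.ne' (mul_left_cancel₀ hs h)

lemma memLp_petersburgTrunc (hX : Measurable X) (m : ℕ) (p : ENNReal) :
    MemLp (fun ω => petersburgTrunc s r m (X ω)) p μ :=
  memLp_indicator_finset_comp hX _ _ p

variable (hX : Measurable X)
  (hlaw : ∀ k : ℕ, μ {ω | X ω = s * r ^ k} = ENNReal.ofReal (p * q ^ k))
include hX hlaw

lemma integral_indicator_petersburgPayoffs (hp : 0 ≤ p) (hq : 0 ≤ q) (hs : s ≠ 0) (hr : 1 < r)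
    (m : ℕ) (g : ℝ → ℝ) :
    ∫ ω, (petersburgPayoffs s r m : Set ℝ).indicator g (X ω) ∂μ
      = ∑ k ∈ Finset.range m, p * q ^ k * g (s * r ^ k) := by
  rw [integral_indicator_finset_comp hX, sum_petersburgPayoffs hs hr]
  refine Finset.sum_congr rfl fun k _ => ?_
  rw [measureReal_def, show μ (X ⁻¹' {s * r ^ k}) = _ from hlaw k,
    ENNReal.toReal_ofReal (by positivity), smul_eq_mul]

lemma integral_petersburgTrunc (hp : 0 ≤ p) (hs : s ≠ 0) (hr : 1 < r) (hrq : r * q = 1)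
    (m : ℕ) : μ[fun ω => petersburgTrunc s r m (X ω)] = m * (s * p) := by
  have hq : 0 ≤ q := nonneg_of_mul_nonneg_right (hrq ▸ zero_le_one) (by linarith)
  rw [petersburgTrunc, integral_indicator_petersburgPayoffs hX hlaw hp hq hs hr]
  simp only [id, fun k => show p * q ^ k * (s * r ^ k) = s * p * (r * q) ^ k by ring, hrq,
    one_pow, mul_one, Finset.sum_const, Finset.card_range, nsmul_eq_mul]

lemma variance_petersburgTrunc_le (hp : 0 ≤ p) (hs : s ≠ 0) (hr : 1 < r) (hrq : r * q = 1)
    (m : ℕ) :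
    variance (fun ω => petersburgTrunc s r m (X ω)) μ ≤ s ^ 2 * p * r ^ m / (r - 1) := by
  have hq : 0 ≤ q := nonneg_of_mul_nonneg_right (hrq ▸ zero_le_one) (by linarith)
  have hsq : (fun ω => petersburgTrunc s r m (X ω)) ^ 2
      = fun ω => (petersburgPayoffs s r m : Set ℝ).indicator (· ^ 2) (X ω) := by
    ext ω
    simp only [Pi.pow_apply, petersburgTrunc, Set.indicator_apply]
    split_ifs <;> simp
  calc variance (fun ω => petersburgTrunc s r m (X ω)) μ
      ≤ μ[(fun ω => petersburgTrunc s r m (X ω)) ^ 2] :=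
        variance_le_expectation_sq (memLp_petersburgTrunc hX m 1).aestronglyMeasurable
    _ = s ^ 2 * p * ∑ k ∈ Finset.range m, r ^ k := by
        rw [hsq, integral_indicator_petersburgPayoffs hX hlaw hp hq hs hr, Finset.mul_sum]
        refine Finset.sum_congr rfl fun k _ => ?_
        rw [show p * q ^ k * (s * r ^ k) ^ 2 = s ^ 2 * p * r ^ k * (r * q) ^ k by ring, hrq,
          one_pow, mul_one]
    _ ≤ s ^ 2 * p * r ^ m / (r - 1) := by
        rw [mul_div_assoc]
        gcongr
        rw [le_div_iff₀ (by linarith), mul_comm, mul_geom_sum]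
        linarith

lemma measure_ne_petersburgTrunc_le (hp : 0 ≤ p) (hq : 0 ≤ q) (hpq : p + q = 1) (hs : s ≠ 0)
    (hr : 1 < r) (m : ℕ) :
    μ {ω | X ω ≠ petersburgTrunc s r m (X ω)} ≤ ENNReal.ofReal (q ^ m) := by
  have hsupport : μ (X ⁻¹' petersburgPayoffs s r m) = ENNReal.ofReal (1 - q ^ m) := by
    rw [← sum_measure_preimage_singleton _ fun _ _ => hX (measurableSet_singleton _),
      sum_petersburgPayoffs hs hr, ← mul_neg_geom_sum, ← eq_sub_of_add_eq hpq, Finset.mul_sum,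
      ENNReal.ofReal_sum_of_nonneg fun k _ => by positivity]
    exact Finset.sum_congr rfl fun k _ => hlaw k
  calc μ {ω | X ω ≠ petersburgTrunc s r m (X ω)}
      ≤ μ ((X ⁻¹' petersburgPayoffs s r m)ᶜ) := measure_mono fun ω hω hmem =>
        hω (Set.indicator_of_mem (show X ω ∈ (petersburgPayoffs s r m : Set ℝ) from hmem) id).symm
    _ = ENNReal.ofReal (q ^ m) := by
        rw [prob_compl_eq_one_sub (hX (Finset.measurableSet _)), hsupport, ← ENNReal.ofReal_one,
          ← ENNReal.ofReal_sub _ (sub_nonneg.2 (pow_le_one₀ hq (by linarith))), sub_sub_cancel]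

end Petersburg

lemma measure_lt_abs_petersburgSum_div_sub_le {Ω : Type*} [MeasurableSpace Ω] {μ : Measure Ω}
    [IsProbabilityMeasure μ] {X : ℕ → Ω → ℝ} {p q s r : ℝ} (hX : ∀ i, Measurable (X i))
    (hindep : iIndepFun X μ)
    (hlaw : ∀ i, ∀ k : ℕ, μ {ω | X i ω = s * r ^ k} = ENNReal.ofReal (p * q ^ k))
    (hp : 0 ≤ p) (hpq : p + q = 1) (hs : s ≠ 0) (hr : 1 < r) (hrq : r * q = 1) (n m : ℕ)
    {b ε δ : ℝ} (hb : 0 < b) (hδ : 0 < δ) (hmean : |s * p * (n * m / b) - s * p| ≤ ε - δ) :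
    μ {ω | ε < |(∑ i ∈ Finset.range n, X i ω) / b - s * p|}
      ≤ ENNReal.ofReal (n / r ^ m)
        + ENNReal.ofReal (s ^ 2 * p / ((r - 1) * δ ^ 2) * (n * r ^ m / b ^ 2)) := by
  have hqr : q = r⁻¹ := eq_inv_of_mul_eq_one_right hrq
  have hq : 0 ≤ q := hqr ▸ inv_nonneg.2 (by linarith)
  have hindepY : iIndepFun (fun i ω => petersburgTrunc s r m (X i ω)) μ :=
    hindep.comp _ fun _ => measurable_id.indicator (Finset.measurableSet _)
  refine (measure_lt_abs_sum_div_sub_le (Finset.range n)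
    (fun i => memLp_petersburgTrunc (hX i) m 2) (fun i j hij => hindepY.indepFun hij) hb hδ
    ?_).trans (add_le_add ?_ ?_)
  · simp only [integral_petersburgTrunc (hX _) (hlaw _) hp hs hr hrq, Finset.sum_const,
      Finset.card_range, nsmul_eq_mul]
    convert hmean using 3
    ring
  · calc ∑ i ∈ Finset.range n, μ {ω | X i ω ≠ petersburgTrunc s r m (X i ω)}
        ≤ ∑ _i ∈ Finset.range n, ENNReal.ofReal (q ^ m) := Finset.sum_le_sum fun i _ =>
          measure_ne_petersburgTrunc_le (hX i) (hlaw i) hp hq hpq hs hr m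
      _ = ENNReal.ofReal (n / r ^ m) := by
          rw [Finset.sum_const, Finset.card_range, nsmul_eq_mul, ← ENNReal.ofReal_natCast,
            ← ENNReal.ofReal_mul n.cast_nonneg, hqr, inv_pow, div_eq_mul_inv]
  · refine ENNReal.ofReal_le_ofReal ?_
    calc (∑ i ∈ Finset.range n, variance (fun ω => petersburgTrunc s r m (X i ω)) μ)
          / (δ * b) ^ 2
        ≤ (∑ _i ∈ Finset.range n, s ^ 2 * p * r ^ m / (r - 1)) / (δ * b) ^ 2 := by
          gcongr with i
          exact variance_petersburgTrunc_le (hX i) (hlaw i) hp hs hr hrq m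
      _ = s ^ 2 * p / ((r - 1) * δ ^ 2) * (n * r ^ m / b ^ 2) := by
          rw [Finset.sum_const, Finset.card_range, nsmul_eq_mul]
          field_simp

lemma pow_floor_logb_le {r b : ℝ} (hr : 1 < r) (hb : 1 ≤ b) : r ^ ⌊Real.logb r b⌋₊ ≤ b := by
  rw [← Real.rpow_natCast, ← Real.le_logb_iff_rpow_le hr (by linarith)]
  exact Nat.floor_le (Real.logb_nonneg hr hb)

lemma lt_pow_floor_logb_add_one {r b : ℝ} (hr : 1 < r) (hb : 0 < b) :
    b < r ^ (⌊Real.logb r b⌋₊ + 1) := by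
  rw [← Real.rpow_natCast, ← Real.logb_lt_iff_lt_rpow hr hb, Nat.cast_add_one]
  exact Nat.lt_floor_add_one _

noncomputable def fellerScale (r : ℝ) (n : ℕ) : ℝ := n * Real.logb r n

noncomputable def truncLevel (r : ℝ) (n : ℕ) : ℕ := ⌊Real.logb r (fellerScale r n)⌋₊

section Asymptotics

variable {r : ℝ} (hr : 1 < r)
include hr

lemma tendsto_logb_natCast_atTop : Tendsto (fun n : ℕ => Real.logb r n) atTop atTop :=
  (Real.tendsto_logb_atTop hr).comp tendsto_natCast_atTop_atTop

lemma tendsto_fellerScale_atTop : Tendsto (fellerScale r) atTop atTop :=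
  tendsto_natCast_atTop_atTop.atTop_mul_atTop₀ (tendsto_logb_natCast_atTop hr)

lemma tendsto_natCast_mul_truncLevel_div_fellerScale :
    Tendsto (fun n => n * truncLevel r n / fellerScale r n) atTop (𝓝 1) := by
  have hL := tendsto_logb_natCast_atTop hr
  have hfloor : Tendsto (fun n : ℕ => (truncLevel r n : ℝ) / Real.logb r (fellerScale r n))
      atTop (𝓝 1) :=
    tendsto_nat_floor_div_atTop.comp
      ((Real.tendsto_logb_atTop hr).comp (tendsto_fellerScale_atTop hr))
  have hratio : Tendsto (fun n : ℕ => 1 + Real.logb r (Real.logb r n) / Real.logb r n)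
      atTop (𝓝 1) := by
    simpa using
      ((Real.isLittleO_logb_id_atTop (b := r)).tendsto_div_nhds_zero.comp hL).const_add 1
  have hprod := hfloor.mul hratio
  rw [mul_one] at hprod
  refine hprod.congr' ?_
  filter_upwards [eventually_gt_atTop 0, hL.eventually_gt_atTop 0,
    ((Real.tendsto_logb_atTop hr).comp (tendsto_fellerScale_atTop hr)).eventually_gt_atTop 0]
    with n hn hLn hy
  simp only [Function.comp_apply] at hy
  have hsplit : Real.logb r (fellerScale r n) = Real.logb r n + Real.logb r (Real.logb r n) :=
    Real.logb_mul (by positivity) hLn.ne'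
  rw [fellerScale] at hsplit hy ⊢
  field_simp
  rw [hsplit]

lemma tendsto_natCast_div_pow_truncLevel :
    Tendsto (fun n => n / r ^ truncLevel r n) atTop (𝓝 0) := by
  have hL := tendsto_logb_natCast_atTop hr
  refine squeeze_zero' (.of_forall fun n => by positivity) ?_
    ((tendsto_const_nhds (x := r)).div_atTop hL)
  filter_upwards [eventually_gt_atTop 0, hL.eventually_gt_atTop 0] with n hn hLn
  have hb := lt_pow_floor_logb_add_one hr
    (show 0 < fellerScale r n by unfold fellerScale; positivity)
  rw [← truncLevel, pow_succ, fellerScale] at hb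
  rw [div_le_div_iff₀ (by positivity) hLn]
  nlinarith

lemma tendsto_natCast_mul_pow_truncLevel_div_sq :
    Tendsto (fun n => n * r ^ truncLevel r n / fellerScale r n ^ 2) atTop (𝓝 0) := by
  have hL := tendsto_logb_natCast_atTop hr
  refine squeeze_zero' (.of_forall fun n => by positivity) ?_ (tendsto_inv_atTop_zero.comp hL)
  filter_upwards [eventually_gt_atTop 0, hL.eventually_ge_atTop 1] with n hn hLn
  have hb : 1 ≤ fellerScale r n := one_le_mul_of_one_le_of_one_le (by exact_mod_cast hn) hLn
  have hpow := pow_floor_logb_le hr hb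
  rw [← truncLevel] at hpow
  calc n * r ^ truncLevel r n / fellerScale r n ^ 2
      ≤ n * fellerScale r n / fellerScale r n ^ 2 := by gcongr
    _ = (Real.logb r n)⁻¹ := by
        rw [fellerScale] at hb ⊢
        field_simp

end Asymptotics

theorem petersburg_feller_weak_law
    {Ω : Type*} [MeasureSpace Ω] [IsProbabilityMeasure (ℙ : Measure Ω)]
    (X : ℕ → Ω → ℝ) (hX : ∀ i, Measurable (X i)) (p q s r : ℝ)
    (hp : 0 < p) (hp1 : p < 1) (hq : q = 1 - p) (hs : 0 < s) (hr : r = 1 / q)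
    (hindep : iIndepFun X ℙ)
    (hlaw : ∀ i, ∀ k : ℕ, ℙ {ω | X i ω = s * r ^ k} = ENNReal.ofReal (p * q ^ k)) :
    ∀ ε : ℝ, 0 < ε →
      Filter.Tendsto
        (fun n : ℕ =>
          ℙ {ω | ε < |(∑ i ∈ Finset.range n, X i ω) / (n * Real.logb r n) - s * p|})
        Filter.atTop (nhds 0) := by
  intro ε hε
  have hq0 : 0 < q := by linarith
  have hr1 : 1 < r := hr ▸ one_lt_one_div hq0 (by linarith)
  have hrq : r * q = 1 := by rw [hr, one_div_mul_cancel hq0.ne']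
  have hmean : ∀ᶠ n in atTop,
      |s * p * (n * truncLevel r n / fellerScale r n) - s * p| ≤ ε - ε / 2 := by
    have hlim := (tendsto_natCast_mul_truncLevel_div_fellerScale hr1).const_mul (s * p)
    rw [mul_one] at hlim
    filter_upwards [Metric.tendsto_nhds.1 hlim (ε / 2) (by positivity)] with n hn
    rw [← Real.dist_eq]
    linarith
  have hbound := (ENNReal.tendsto_ofReal (tendsto_natCast_div_pow_truncLevel hr1)).add
    (ENNReal.tendsto_ofReal ((tendsto_natCast_mul_pow_truncLevel_div_sq hr1).const_mul
      (s ^ 2 * p / ((r - 1) * (ε / 2) ^ 2))))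
  rw [mul_zero, ENNReal.ofReal_zero, add_zero] at hbound
  refine tendsto_of_tendsto_of_tendsto_of_le_of_le' tendsto_const_nhds hbound
    (.of_forall fun _ => zero_le) ?_
  filter_upwards [hmean, (tendsto_fellerScale_atTop hr1).eventually_gt_atTop 0] with n hmean hb
  exact measure_lt_abs_petersburgSum_div_sub_le hX hindep hlaw hp.le (by linarith) hs.ne' hr1 hrq
    n (truncLevel r n) hb (by positivity) hmean
end

section
/- Let 0 < p < 1, q = 1 − p, s > 0, r = 1/q, a > 0, c_k = 1 for k < 0 and c_k = 0 for k ≥ 0, and define g(t) = i·t·s·q + Σ_{k=−∞}^{∞} ∫_{s·r^{k−1}}^{s·r^k} q^k·(e^{i·t·x} − 1 − i·t·x·c_k)·(dx/x). Then for every integer m, g(t·q^m) = q^m·(g(t) + i·t·s·m·p). -/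
/-!
Substituting `x ↦ q ^ m * x` turns the `k`-th block of the series for `g (t * q ^ m)` into
`q ^ m` times the `(k - m)`-th block of the series for `g t`, except that it keeps the centering
constant `c_k` instead of `c_{k-m}`. Changing the centering on `[a, b]` costs `i t c (b - a)`, and
`q ^ j * (s r ^ j - s r ^ (j - 1)) = s p` for every block, so the discrepancies add up to
`i t s p ∑ j, (c_j - c_{j+m}) = i t s p m`. Splitting the series this way is legitimate because the
blocks are `O(q ^ |k|)`: for `k ≥ 0` since `|e^{iu} - 1| ≤ 2`, for `k < 0` since
`|e^{iu} - 1 - iu| ≤ 2 u ^ 2`.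
-/

open Complex

theorem norm_exp_I_mul_ofReal_sub_one_le_two (u : ℝ) : ‖exp (I * u) - 1‖ ≤ 2 := by
  calc ‖exp (I * u) - 1‖ ≤ ‖exp (I * u)‖ + ‖(1 : ℂ)‖ := norm_sub_le _ _
    _ = 2 := by rw [norm_exp_I_mul_ofReal, norm_one]; norm_num

theorem norm_exp_I_mul_ofReal_sub_one_sub_le (u : ℝ) :
    ‖exp (I * u) - 1 - I * u‖ ≤ 2 * u ^ 2 := by
  have hIu : ‖I * (u : ℂ)‖ = |u| := by simp
  rcases le_or_gt |u| 1 with hu | hu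
  · calc ‖exp (I * u) - 1 - I * u‖ ≤ ‖I * (u : ℂ)‖ ^ 2 :=
          norm_exp_sub_one_sub_id_le (by rwa [hIu])
      _ ≤ 2 * u ^ 2 := by rw [hIu, sq_abs]; nlinarith [sq_nonneg u]
  · calc ‖exp (I * u) - 1 - I * u‖ ≤ ‖exp (I * u) - 1‖ + ‖I * (u : ℂ)‖ := norm_sub_le _ _
      _ ≤ |u| + |u| := by
          rw [hIu]; gcongr; simpa using Real.norm_exp_I_mul_ofReal_sub_one_le (x := u)
      _ ≤ 2 * u ^ 2 := by nlinarith [sq_abs u]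

noncomputable def levyIntegral (t : ℝ) (c : ℂ) (a b : ℝ) : ℂ :=
  ∫ x in a..b, (exp (I * t * x) - 1 - I * t * x * c) / x

section levyIntegral

variable {a b : ℝ}

theorem levyIntegral_mul_left (t : ℝ) (c : ℂ) {l : ℝ} (hl : l ≠ 0) :
    levyIntegral (t * l) c a b = levyIntegral t c (l * a) (l * b) := by
  have hscale : ∀ x : ℝ, (exp (I * ↑(t * l) * x) - 1 - I * ↑(t * l) * x * c) / x =
      l • (fun y : ℝ => (exp (I * t * y) - 1 - I * t * y * c) / y) (l * x) := by
    intro x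
    rcases eq_or_ne x 0 with rfl | hx
    · simp
    · have hl' : (l : ℂ) ≠ 0 := by exact_mod_cast hl
      simp only [real_smul]
      push_cast
      field_simp
  simp only [levyIntegral, hscale, intervalIntegral.integral_smul]
  exact intervalIntegral.smul_integral_comp_mul_left
    (fun y : ℝ => (exp (I * t * y) - 1 - I * t * y * c) / y) l

theorem levyIntegral_eq_sub (t : ℝ) (c : ℂ) (ha : 0 < a) (hab : a ≤ b) :
    levyIntegral t c a b = levyIntegral t 0 a b - I * t * c * (b - a) := by
  have hx : ∀ x ∈ Set.uIcc a b, (x : ℂ) ≠ 0 := fun x hx => by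
    rw [Set.uIcc_of_le hab] at hx
    exact_mod_cast (ha.trans_le hx.1).ne'
  have hint :
      IntervalIntegrable (fun x : ℝ => (exp (I * t * x) - 1) / x) MeasureTheory.volume a b :=
    (ContinuousOn.div (by fun_prop) (by fun_prop) hx).intervalIntegrable
  have hcongr : Set.EqOn (fun x : ℝ => (exp (I * t * x) - 1 - I * t * x * c) / x)
      (fun x : ℝ => (exp (I * t * x) - 1) / x - I * t * c) (Set.uIcc a b) := fun x hx' => by
    have := hx x hx'
    field_simp
  simp only [levyIntegral, mul_zero, sub_zero]
  rw [intervalIntegral.integral_congr hcongr, intervalIntegral.integral_sub hint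
    intervalIntegrable_const, intervalIntegral.integral_const, real_smul]
  push_cast
  ring

theorem norm_levyIntegral_zero_le (t : ℝ) (ha : 0 < a) (hab : a ≤ b) :
    ‖levyIntegral t 0 a b‖ ≤ 2 / a * (b - a) := by
  have hbound : ∀ x ∈ Set.uIoc a b, ‖(exp (I * t * x) - 1 - I * t * x * 0) / x‖ ≤ 2 / a := by
    intro x hx
    rw [Set.uIoc_of_le hab] at hx
    have hx0 : 0 < x := ha.trans hx.1
    rw [mul_zero, sub_zero, norm_div, norm_real, Real.norm_of_nonneg hx0.le]
    have := norm_exp_I_mul_ofReal_sub_one_le_two (t * x)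
    push_cast at this
    rw [← mul_assoc] at this
    exact div_le_div₀ zero_le_two this ha hx.1.le
  simpa [levyIntegral, abs_of_nonneg (sub_nonneg.2 hab)] using
    intervalIntegral.norm_integral_le_of_norm_le_const hbound

theorem norm_levyIntegral_one_le (t : ℝ) (ha : 0 < a) (hab : a ≤ b) :
    ‖levyIntegral t 1 a b‖ ≤ 2 * t ^ 2 * b * (b - a) := by
  have hbound : ∀ x ∈ Set.uIoc a b,
      ‖(exp (I * t * x) - 1 - I * t * x * 1) / x‖ ≤ 2 * t ^ 2 * b := by
    intro x hx
    rw [Set.uIoc_of_le hab] at hx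
    have hx0 : 0 < x := ha.trans hx.1
    rw [mul_one, norm_div, norm_real, Real.norm_of_nonneg hx0.le, div_le_iff₀ hx0]
    have := norm_exp_I_mul_ofReal_sub_one_sub_le (t * x)
    push_cast at this
    rw [← mul_assoc] at this
    calc _ ≤ 2 * (t * x) ^ 2 := this
      _ = 2 * t ^ 2 * x * x := by ring
      _ ≤ 2 * t ^ 2 * b * x := by gcongr; exact hx.2
  simpa [levyIntegral, abs_of_nonneg (sub_nonneg.2 hab)] using
    intervalIntegral.norm_integral_le_of_norm_le_const hbound

end levyIntegral

theorem hasSum_ite_neg_sub_ite_add_neg (m : ℤ) :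
    HasSum (fun j : ℤ => (if j < 0 then (1 : ℂ) else 0) - if j + m < 0 then 1 else 0) m := by
  induction m using Int.induction_on with
  | zero => simp
  | succ m ih =>
    rw [Int.cast_add, Int.cast_one]
    refine (ih.add (hasSum_ite_eq (-1 - (m : ℤ)) (1 : ℂ))).congr_fun fun j => ?_
    split_ifs <;> first | (exfalso; omega) | norm_num
  | pred m ih =>
    rw [Int.cast_sub, Int.cast_one]
    refine (ih.sub (hasSum_ite_eq (m : ℤ) (1 : ℂ))).congr_fun fun j => ?_
    split_ifs <;> first | (exfalso; omega) | norm_num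

/-- The `k`-th term of the series for `g t`, written with `q⁻¹` for `r`. -/
noncomputable def petersburgSummand (q s t : ℝ) (k : ℤ) : ℂ :=
  (q : ℂ) ^ k * levyIntegral t (if k < 0 then 1 else 0) (s * q⁻¹ ^ (k - 1)) (s * q⁻¹ ^ k)

section petersburg

variable {q s : ℝ}

theorem mul_inv_zpow_sub_one (hq : q ≠ 0) (s : ℝ) (k : ℤ) :
    s * q⁻¹ ^ (k - 1) = q * (s * q⁻¹ ^ k) := by
  rw [zpow_sub_one₀ (inv_ne_zero hq), inv_inv]
  ring

theorem zpow_mul_mul_inv_zpow (hq : q ≠ 0) (s : ℝ) (m j : ℤ) :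
    q ^ m * (s * q⁻¹ ^ j) = s * q⁻¹ ^ (j - m) := by
  rw [zpow_sub₀ (inv_ne_zero hq), inv_zpow, inv_zpow]
  field_simp

theorem petersburgSummand_mul_zpow (hq : 0 < q) (hq1 : q ≤ 1) (hs : 0 < s) (t : ℝ) (m k : ℤ) :
    petersburgSummand q s (t * q ^ m) (k + m) = q ^ m * (petersburgSummand q s t k +
      I * t * s * (1 - q) * ((if k < 0 then 1 else 0) - if k + m < 0 then 1 else 0)) := by
  set b := s * q⁻¹ ^ k with hb
  have hb0 : 0 < b := by positivity
  have hqb : q * b ≤ b := mul_le_of_le_one_left hb0.le hq1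
  have hqk : (q : ℂ) ^ k * b = s := by
    rw [hb]; push_cast
    rw [mul_left_comm, ← mul_zpow, mul_inv_cancel₀ (by exact_mod_cast hq.ne'), one_zpow, mul_one]
  simp only [petersburgSummand]
  rw [levyIntegral_mul_left _ _ (zpow_ne_zero m hq.ne'), zpow_mul_mul_inv_zpow hq.ne',
    zpow_mul_mul_inv_zpow hq.ne', add_sub_cancel_right, show k + m - 1 - m = k - 1 by ring,
    mul_inv_zpow_sub_one hq.ne', ← hb, levyIntegral_eq_sub _ _ (mul_pos hq hb0) hqb,
    levyIntegral_eq_sub t (if k < 0 then 1 else 0) (mul_pos hq hb0) hqb,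
    zpow_add₀ (by exact_mod_cast hq.ne')]
  push_cast
  linear_combination (q ^ m * I * t * (1 - q) * ((if k < 0 then 1 else 0) -
    if k + m < 0 then 1 else 0) : ℂ) * hqk

theorem norm_petersburgSummand_le_of_nonneg (hq : 0 < q) (hq1 : q ≤ 1) (hs : 0 < s) (t : ℝ)
    {k : ℤ} (hk : 0 ≤ k) : ‖petersburgSummand q s t k‖ ≤ 2 * (1 - q) / q * q ^ k := by
  set b := s * q⁻¹ ^ k with hb
  have hb0 : 0 < b := by positivity
  rw [petersburgSummand, if_neg (not_lt.2 hk), mul_inv_zpow_sub_one hq.ne', ← hb, norm_mul,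
    norm_zpow, norm_real, Real.norm_of_nonneg hq.le]
  calc q ^ k * ‖levyIntegral t 0 (q * b) b‖ ≤ q ^ k * (2 / (q * b) * (b - q * b)) :=
        mul_le_mul_of_nonneg_left (norm_levyIntegral_zero_le t (mul_pos hq hb0)
          (mul_le_of_le_one_left hb0.le hq1)) (zpow_nonneg hq.le k)
    _ = 2 * (1 - q) / q * q ^ k := by field_simp

theorem norm_petersburgSummand_le_of_neg (hq : 0 < q) (hq1 : q ≤ 1) (hs : 0 < s) (t : ℝ)
    {k : ℤ} (hk : k < 0) :
    ‖petersburgSummand q s t k‖ ≤ 2 * t ^ 2 * s ^ 2 * (1 - q) * q ^ (-k) := by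
  set b := s * q⁻¹ ^ k with hb
  have hb0 : 0 < b := by positivity
  have hqk : q ^ k * b = s := by
    rw [hb, mul_left_comm, ← mul_zpow, mul_inv_cancel₀ hq.ne', one_zpow, mul_one]
  rw [petersburgSummand, if_pos hk, mul_inv_zpow_sub_one hq.ne', ← hb, norm_mul,
    norm_zpow, norm_real, Real.norm_of_nonneg hq.le]
  calc q ^ k * ‖levyIntegral t 1 (q * b) b‖ ≤ q ^ k * (2 * t ^ 2 * b * (b - q * b)) :=
        mul_le_mul_of_nonneg_left (norm_levyIntegral_one_le t (mul_pos hq hb0)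
          (mul_le_of_le_one_left hb0.le hq1)) (zpow_nonneg hq.le k)
    _ = 2 * t ^ 2 * (1 - q) * (q ^ k * b) * b := by ring
    _ = 2 * t ^ 2 * s ^ 2 * (1 - q) * q ^ (-k) := by rw [hqk, hb, inv_zpow']; ring

theorem summable_petersburgSummand (hq : 0 < q) (hq1 : q < 1) (hs : 0 < s) (t : ℝ) :
    Summable (petersburgSummand q s t) := by
  have hgeom := summable_geometric_of_lt_one hq.le hq1
  refine .of_nat_of_neg_add_one (.of_norm_bounded (hgeom.mul_left (2 * (1 - q) / q)) fun n => ?_)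
    (.of_norm_bounded (hgeom.mul_left (2 * t ^ 2 * s ^ 2 * (1 - q) * q)) fun n => ?_)
  · simpa using norm_petersburgSummand_le_of_nonneg hq hq1.le hs t (Int.natCast_nonneg n)
  · have h := norm_petersburgSummand_le_of_neg hq hq1.le hs t (k := -(n + 1)) (by omega)
    rw [neg_neg, zpow_add_one₀ hq.ne', zpow_natCast] at h
    linarith

theorem tsum_petersburgSummand_mul_zpow (hq : 0 < q) (hq1 : q < 1) (hs : 0 < s) (t : ℝ) (m : ℤ) :
    ∑' k, petersburgSummand q s (t * q ^ m) k =
      q ^ m * (∑' k, petersburgSummand q s t k + I * t * s * (1 - q) * m) := by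
  rw [← (Equiv.addRight m).tsum_eq]
  simp only [Equiv.coe_addRight, petersburgSummand_mul_zpow hq hq1.le hs]
  rw [tsum_mul_left, (summable_petersburgSummand hq hq1 hs t).tsum_add
    ((hasSum_ite_neg_sub_ite_add_neg m).summable.mul_left _), tsum_mul_left,
    (hasSum_ite_neg_sub_ite_add_neg m).tsum_eq]

end petersburg

theorem petersburg_U_levy_exponent_semistable_general
    (p q s r : ℝ) (hp : 0 < p) (hp1 : p < 1) (hq : q = 1 - p) (hs : 0 < s)
    (hr : r = 1 / q) (g : ℝ → ℂ)
    (hg : ∀ t : ℝ, g t =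
      Complex.I * t * s * q +
      ∑' k : ℤ,
        ∫ x in (s * r ^ (k - 1))..(s * r ^ k),
          (q : ℂ) ^ k *
            (Complex.exp (Complex.I * t * x) - 1
              - Complex.I * t * x * (if k < 0 then 1 else 0)) / x) :
    ∀ (t : ℝ) (m : ℤ),
      g (t * q ^ m) = (q : ℂ) ^ m * (g t + Complex.I * t * s * m * p) := by
  intro t m
  obtain rfl : p = 1 - q := by linarith
  subst hr
  have hg_summand (u : ℝ) : g u = I * u * s * q + ∑' k, petersburgSummand q s u k := by
    simp only [hg u, petersburgSummand, levyIntegral, one_div, mul_div_assoc,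
      intervalIntegral.integral_const_mul]
  rw [hg_summand, hg_summand, tsum_petersburgSummand_mul_zpow (by linarith) (by linarith) hs]
  push_cast
  ring

theorem petersburg_U_levy_exponent_semistable
    (p q s r a : ℝ) (hp : 0 < p) (hp1 : p < 1) (hq : q = 1 - p) (hs : 0 < s)
    (hr : r = 1 / q) (ha : 0 < a) (g : ℝ → ℂ)
    (hg : ∀ t : ℝ, g t =
      Complex.I * t * s * q +
      ∑' k : ℤ,
        ∫ x in (s * r ^ (k - 1))..(s * r ^ k),
          (q : ℂ) ^ k *
            (Complex.exp (Complex.I * t * x) - 1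
              - Complex.I * t * x * (if k < 0 then 1 else 0)) / x) :
    ∀ (t : ℝ) (m : ℤ),
      g (t * q ^ m) = (q : ℂ) ^ m * (g t + Complex.I * t * s * m * p) :=
  petersburg_U_levy_exponent_semistable_general p q s r hp hp1 hq hs hr g hg
end

section
/- Let 0 < p < 1, q = 1 − p, s, r > 0 with r > 1, and let T be geometric with P(T = k) = p·q^(k−1). Define V = s·r^(T−1) − p·s·(r^T − 1)/(r − 1) (net gain: payoff minus accumulated fees p·s·r^(j−1) for rounds j = 1,…,T, where the game stops at round T ≤ n with payoff, or the fees up to round n are lost if T > n). For the truncated game with horizon n, define Vₙ = s·r^(T−1) − p·s·(r^T − 1)/(r − 1) if T ≤ n, and Vₙ = −p·s·(r^n − 1)/(r − 1) if T > n. Then E[Vₙ] = 0, i.e., the truncated game is fair. -/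
open MeasureTheory ProbabilityTheory

/-!
Round `k + 1` is reached with probability `q ^ k`, and given that, its fee `p * s * r ^ k` is
exactly the expected prize `p * (s * r ^ k)`, so every round is fair. Accordingly the expected
net gain on `{T ≤ n}` is `F * q ^ n`, where `F = p * s * (r ^ n - 1) / (r - 1)` is the total fee
of `n` rounds, and this is what is lost on `{T > n}`, an event of probability `q ^ n`.
-/

lemma hasSum_mul_one_sub_pow {p : ℝ} (hp : 0 < p) (hp1 : p ≤ 1) :
    HasSum (fun k : ℕ => p * (1 - p) ^ k) 1 := by
  have := (hasSum_geometric_of_lt_one (r := 1 - p) (by linarith) (by linarith)).mul_left p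
  rwa [sub_sub_cancel, mul_inv_cancel₀ hp.ne'] at this

lemma sum_mul_one_sub_pow (p : ℝ) (n : ℕ) :
    ∑ k ∈ Finset.range n, p * (1 - p) ^ k = 1 - (1 - p) ^ n := by
  rw [← Finset.mul_sum, ← mul_neg_geom_sum, sub_sub_cancel]

lemma sum_truncated_gain_mul_geometric (p s : ℝ) {r : ℝ} (hr : r ≠ 1) (n : ℕ) :
    ∑ k ∈ Finset.range n,
      (s * r ^ k - p * s * (r ^ (k + 1) - 1) / (r - 1)) * (p * (1 - p) ^ k)
      = p * s * (r ^ n - 1) / (r - 1) * (1 - p) ^ n := by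
  have hr1 : r - 1 ≠ 0 := sub_ne_zero.2 hr
  induction n with
  | zero => simp
  | succ m ih =>
    rw [Finset.sum_range_succ, ih]
    field_simp
    ring

section

variable {Ω : Type*} [MeasurableSpace Ω] {μ : Measure Ω} [IsProbabilityMeasure μ] {T : Ω → ℕ}

lemma measure_eq_zero_of_hasSum_measure_succ (hT : Measurable T) {f : ℕ → ℝ}
    (hf : HasSum f 1) (hf0 : ∀ k, 0 ≤ f k)
    (hlaw : ∀ k, μ {ω | T ω = k + 1} = ENNReal.ofReal (f k)) :
    μ {ω | T ω = 0} = 0 := by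
  have hsucc : ∑' k, μ {ω | T ω = k + 1} = 1 := by
    simp_rw [hlaw, ← ENNReal.ofReal_tsum_of_nonneg hf0 hf.summable, hf.tsum_eq, ENNReal.ofReal_one]
  have htotal : ∑' k, μ (T ⁻¹' {k}) = 1 := by
    rw [← measure_iUnion (pairwise_disjoint_fiber T) fun k => hT (measurableSet_singleton k),
      ← Set.preimage_iUnion, Set.iUnion_of_singleton, Set.preimage_univ, measure_univ]
  rw [tsum_eq_zero_add' ENNReal.summable] at htotal
  change μ {ω | T ω = 0} + ∑' k, μ {ω | T ω = k + 1} = 1 at htotal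
  rw [hsucc] at htotal
  exact (ENNReal.add_left_inj ENNReal.one_ne_top).1 (htotal.trans (zero_add 1).symm)

lemma integral_comp_eq_add_sum_of_eq_const (hT : Measurable T)
    {g : ℕ → ℝ} {c : ℝ} {N : ℕ} (hg : ∀ k, N ≤ k → g k = c) :
    ∫ ω, g (T ω) ∂μ = c + ∑ k ∈ Finset.range N, (g k - c) * μ.real {ω | T ω = k} := by
  have hmeas (k : ℕ) : MeasurableSet {ω | T ω = k} := hT (measurableSet_singleton k)
  have hdecomp : (fun ω => g (T ω)) = fun ω =>
      c + ∑ k ∈ Finset.range N, {ω | T ω = k}.indicator (fun _ => g k - c) ω := by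
    funext ω
    simp only [Set.indicator_apply, Set.mem_ofPred_eq, Finset.sum_ite_eq, Finset.mem_range]
    split_ifs with h
    · ring
    · rw [hg _ (not_lt.1 h), add_zero]
  have hint (k : ℕ) : Integrable ({ω | T ω = k}.indicator fun _ => g k - c) μ :=
    (integrable_const _).indicator (hmeas k)
  rw [hdecomp, integral_add (integrable_const c) (integrable_finsetSum _ fun k _ => hint k),
    integral_const, integral_finsetSum _ fun k _ => hint k]
  simp only [probReal_univ, integral_indicator_const _ (hmeas _), smul_eq_mul, mul_comm, mul_one]

end

theorem petersburg_truncated_game_fair_general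
    {Ω : Type*} [MeasureSpace Ω] [IsProbabilityMeasure (ℙ : Measure Ω)]
    (T : Ω → ℕ) (hT : Measurable T) (p q s r : ℝ) (n : ℕ)
    (hp : 0 < p) (hp1 : p < 1) (hq : q = 1 - p) (hr : 1 < r)
    (hlaw : ∀ k : ℕ, ℙ {ω | T ω = k + 1} = ENNReal.ofReal (p * q ^ k))
    (V : Ω → ℝ)
    (hV : ∀ ω, V ω =
      if T ω ≤ n then s * r ^ (T ω - 1) - p * s * (r ^ T ω - 1) / (r - 1)
      else -(p * s * (r ^ n - 1) / (r - 1))) :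
    ∫ ω, V ω ∂ℙ = 0 := by
  subst hq
  have hlaw_nonneg (k : ℕ) : 0 ≤ p * (1 - p) ^ k := by
    have : 0 ≤ 1 - p := by linarith
    positivity
  have hT0 : (ℙ : Measure Ω).real {ω | T ω = 0} = 0 := by
    rw [measureReal_def, measure_eq_zero_of_hasSum_measure_succ hT
      (hasSum_mul_one_sub_pow hp hp1.le) hlaw_nonneg hlaw, ENNReal.toReal_zero]
  have hTsucc (k : ℕ) : (ℙ : Measure Ω).real {ω | T ω = k + 1} = p * (1 - p) ^ k := by
    rw [measureReal_def, hlaw, ENNReal.toReal_ofReal (hlaw_nonneg k)]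
  set c := -(p * s * (r ^ n - 1) / (r - 1))
  let g (k : ℕ) : ℝ := if k ≤ n then s * r ^ (k - 1) - p * s * (r ^ k - 1) / (r - 1) else c
  have hVg (ω : Ω) : V ω = g (T ω) := hV ω
  rw [integral_congr_ae (ae_of_all _ hVg),
    integral_comp_eq_add_sum_of_eq_const (g := g) hT (N := n + 1) fun k hk => if_neg (by omega),
    Finset.sum_range_succ', hT0, mul_zero, add_zero]
  have hterm : ∀ k ∈ Finset.range n, (g (k + 1) - c) * (ℙ : Measure Ω).real {ω | T ω = k + 1} =
      (s * r ^ k - p * s * (r ^ (k + 1) - 1) / (r - 1)) * (p * (1 - p) ^ k)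
        - c * (p * (1 - p) ^ k) := fun k hk => by
    have hk' : k + 1 ≤ n := Finset.mem_range.1 hk
    simp only [g, hTsucc, if_pos hk', Nat.add_sub_cancel]
    ring
  rw [Finset.sum_congr rfl hterm, Finset.sum_sub_distrib, ← Finset.mul_sum,
    sum_truncated_gain_mul_geometric p s hr.ne' n, sum_mul_one_sub_pow]
  ring

theorem petersburg_truncated_game_fair
    {Ω : Type*} [MeasureSpace Ω] [IsProbabilityMeasure (ℙ : Measure Ω)]
    (T : Ω → ℕ) (hT : Measurable T) (p q s r : ℝ) (n : ℕ)
    (hp : 0 < p) (hp1 : p < 1) (hq : q = 1 - p) (hs : 0 < s) (hr : 1 < r)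
    (hlaw : ∀ k : ℕ, ℙ {ω | T ω = k + 1} = ENNReal.ofReal (p * q ^ k))
    (V : Ω → ℝ)
    (hV : ∀ ω, V ω =
      if T ω ≤ n then s * r ^ (T ω - 1) - p * s * (r ^ T ω - 1) / (r - 1)
      else -(p * s * (r ^ n - 1) / (r - 1))) :
    ∫ ω, V ω ∂ℙ = 0 :=
  petersburg_truncated_game_fair_general T hT p q s r n hp hp1 hq hr hlaw V hV
end

section
/- Let X, X₁, X₂, … be i.i.d. with P(X = s·r^(k−1)) = p·q^(k−1), k ≥ 1, where 0 < p < 1, q = 1 − p, s > 0, r = 1/q, and Sₙ = X₁ + ⋯ + Xₙ. Then almost surely limsup_{n→∞} Sₙ/(n·log_r n) = +∞. -/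
open MeasureTheory ProbabilityTheory Filter

/-!
Since the least atom `s * r ^ k` above a level `t` is at most `r * max s t` and carries mass
`(1 - r⁻¹) * r⁻¹ ^ k`, the tail `P(X > t)` is of order `1 / t`. Hence, for every `a > 0`, the
independent events `Xₙ > a (n + 1) log_r (n + 1)` have probabilities comparable to
`1 / (n log n)`, whose series diverges by Cauchy condensation. By the second Borel–Cantelli lemma
they occur infinitely often almost surely, and `S_{n+1} ≥ Xₙ` because the `Xᵢ` are positive.
-/

namespace Real

theorem not_summable_one_div_natCast_mul_log :
    ¬ Summable (fun n : ℕ => 1 / (n * log n)) := by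
  have h_nonneg : 0 ≤ᶠ[atTop] fun n : ℕ => 1 / (n * log n) :=
    Eventually.of_forall fun n => by
      have := log_natCast_nonneg n
      positivity
  have h_anti : ∀ᶠ n : ℕ in atTop, 1 / ((n + 1 : ℕ) * log (n + 1 : ℕ)) ≤ 1 / (n * log n) := by
    filter_upwards [eventually_ge_atTop 2] with n hn
    have hn' : (2 : ℝ) ≤ n := by exact_mod_cast hn
    have hle : (n : ℝ) ≤ (n + 1 : ℕ) := by push_cast; linarith
    exact one_div_le_one_div_of_le (mul_pos (by linarith) (log_pos (by linarith)))
      (mul_le_mul hle (log_le_log (by linarith) hle) (log_nonneg (by linarith)) (by positivity))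
  rw [← summable_condensed_iff_of_eventually_nonneg h_nonneg h_anti]
  have hcondensed : (fun k : ℕ => (2 : ℝ) ^ k * (1 / ((2 ^ k : ℕ) * log (2 ^ k : ℕ)))) =
      fun k : ℕ => (log 2)⁻¹ * (1 / k) := by
    ext k
    have h2k : (2 : ℝ) ^ k ≠ 0 := by positivity
    push_cast
    rw [log_pow]
    field_simp
  rw [hcondensed, summable_mul_left_iff (inv_ne_zero (log_pos one_lt_two).ne')]
  exact not_summable_one_div_natCast

end Real

theorem exists_lt_mul_pow_le_mul_max {r s : ℝ} (hr : 1 < r) (hs : 0 < s) (t : ℝ) :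
    ∃ k : ℕ, t < s * r ^ k ∧ s * r ^ k ≤ r * max s t := by
  obtain ⟨n, hn_le, hn_lt⟩ := exists_nat_pow_near (le_max_left 1 (t / s)) hr
  refine ⟨n + 1, ?_, ?_⟩
  · rw [← div_lt_iff₀' hs]
    exact (le_max_right 1 _).trans_lt hn_lt
  · calc s * r ^ (n + 1) = r * (s * r ^ n) := by ring
      _ ≤ r * (s * max 1 (t / s)) := by gcongr
      _ = r * max s t := by rw [mul_max_of_nonneg _ _ hs.le, mul_one, mul_div_cancel₀ _ hs.ne']

theorem ENNReal.tsum_eq_top_of_ofReal_le {a : ℕ → ENNReal} {f : ℕ → ℝ} (hf : ¬ Summable f)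
    (hf0 : ∀ n, 0 ≤ f n) (h : ∀ n, ENNReal.ofReal (f n) ≤ a n) : ∑' n, a n = ⊤ := by
  by_contra htop
  refine hf (.of_nonneg_of_le hf0 (fun n => ?_) (ENNReal.summable_toReal htop))
  exact (ENNReal.ofReal_le_iff_le_toReal (ENNReal.ne_top_of_tsum_ne_top htop n)).1 (h n)

theorem tsum_ofReal_geometric_eq_one {q : ℝ} (hq0 : 0 ≤ q) (hq1 : q < 1) :
    ∑' k : ℕ, ENNReal.ofReal ((1 - q) * q ^ k) = 1 := by
  rw [← ENNReal.ofReal_tsum_of_nonneg (fun k => by nlinarith [pow_nonneg hq0 k])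
      ((summable_geometric_of_lt_one hq0 hq1).mul_left _), tsum_mul_left,
    tsum_geometric_of_lt_one hq0 hq1, mul_inv_cancel₀ (sub_ne_zero.2 hq1.ne'), ENNReal.ofReal_one]

section

variable {Ω : Type*} [MeasurableSpace Ω] {μ : Measure Ω}

theorem ae_exists_eq_of_tsum_measure_eq_one {β : Type*} [IsProbabilityMeasure μ]
    [MeasurableSpace β] [MeasurableSingletonClass β] {Y : Ω → β} (hY : Measurable Y) {a : ℕ → β}
    (ha : Function.Injective a) (h : ∑' k, μ {ω | Y ω = a k} = 1) :
    ∀ᵐ ω ∂μ, ∃ k, Y ω = a k := by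
  have hmeas : ∀ k, MeasurableSet {ω | Y ω = a k} := fun k => hY (measurableSet_singleton _)
  suffices ∀ᵐ ω ∂μ, ω ∈ ⋃ k, {ω | Y ω = a k} by
    filter_upwards [this] with ω hω using Set.mem_iUnion.1 hω
  rw [ae_mem_iff_measure_eq (MeasurableSet.iUnion hmeas).nullMeasurableSet, measure_univ,
    measure_iUnion (fun i j hij => ?_) hmeas, h]
  exact Set.disjoint_left.2 fun ω hi hj => hij (ha (hi.symm.trans hj))

theorem ae_frequently_mem_of_iIndepFun {β : Type*} [MeasurableSpace β] {X : ℕ → Ω → β}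
    (hX : ∀ n, Measurable (X n)) (hindep : iIndepFun X μ) {B : ℕ → Set β}
    (hB : ∀ n, MeasurableSet (B n)) (hsum : ∑' n, μ (X n ⁻¹' B n) = ⊤) :
    ∀ᵐ ω ∂μ, ∃ᶠ n in atTop, X n ω ∈ B n := by
  have := hindep.isProbabilityMeasure
  have hmeas : ∀ n, MeasurableSet (X n ⁻¹' B n) := fun n => hX n (hB n)
  have hsets : iIndepSet (fun n => X n ⁻¹' B n) μ :=
    (iIndepSet_iff_meas_biInter hmeas).2 fun S =>
      hindep.measure_inter_preimage_eq_mul S fun n _ => hB n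
  have hlimsup := measure_limsup_eq_one hmeas hsets hsum
  rw [← measure_univ (μ := μ), ← ae_mem_iff_measure_eq
    (MeasurableSet.measurableSet_limsup hmeas).nullMeasurableSet] at hlimsup
  filter_upwards [hlimsup] with ω hω
  exact mem_limsup_iff_frequently_mem.1 hω

/-- The paper's `P(X = s r^(k-1)) = p q^(k-1)` for `k ≥ 1`, with `q = r⁻¹`, `p = 1 - q`, indexed
from `k = 0`. -/
def HasPetersburgLaw (μ : Measure Ω) (Y : Ω → ℝ) (s r : ℝ) : Prop :=
  ∀ k : ℕ, μ {ω | Y ω = s * r ^ k} = ENNReal.ofReal ((1 - r⁻¹) * r⁻¹ ^ k)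

namespace HasPetersburgLaw

variable {s r : ℝ}

theorem ae_pos [IsProbabilityMeasure μ] {Y : Ω → ℝ} (h : HasPetersburgLaw μ Y s r)
    (hY : Measurable Y) (hs : 0 < s) (hr : 1 < r) : ∀ᵐ ω ∂μ, 0 < Y ω := by
  have hr0 : 0 < r := by linarith
  have hinj : Function.Injective fun k : ℕ => s * r ^ k :=
    (mul_right_injective₀ hs.ne').comp (pow_right_injective₀ hr0 hr.ne')
  have hsum : ∑' k, μ {ω | Y ω = s * r ^ k} = 1 := by
    simp_rw [h _]
    exact tsum_ofReal_geometric_eq_one (by positivity) (inv_lt_one_of_one_lt₀ hr)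
  filter_upwards [ae_exists_eq_of_tsum_measure_eq_one hY hinj hsum] with ω ⟨k, hk⟩
  rw [hk]
  positivity

theorem ofReal_le_measure_lt {Y : Ω → ℝ} (h : HasPetersburgLaw μ Y s r) (hs : 0 < s)
    (hr : 1 < r) (t : ℝ) :
    ENNReal.ofReal ((1 - r⁻¹) * s / (r * max s t)) ≤ μ {ω | t < Y ω} := by
  obtain ⟨k, hk_lt, hk_le⟩ := exists_lt_mul_pow_le_mul_max hr hs t
  have hr0 : 0 < r := by linarith
  calc ENNReal.ofReal ((1 - r⁻¹) * s / (r * max s t))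
      ≤ ENNReal.ofReal ((1 - r⁻¹) * r⁻¹ ^ k) := by
        refine ENNReal.ofReal_le_ofReal ?_
        rw [mul_div_assoc, inv_pow]
        refine mul_le_mul_of_nonneg_left ?_ (sub_nonneg.2 (inv_le_one_of_one_le₀ hr.le))
        rw [div_le_iff₀ (by positivity), inv_mul_eq_div, le_div_iff₀ (by positivity)]
        exact hk_le
    _ = μ {ω | Y ω = s * r ^ k} := (h k).symm
    _ ≤ μ {ω | t < Y ω} := measure_mono fun ω (hω : Y ω = _) => show t < Y ω from hω ▸ hk_lt

theorem tsum_measure_mul_logb_lt_eq_top {X : ℕ → Ω → ℝ} (h : ∀ n, HasPetersburgLaw μ (X n) s r)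
    (hs : 0 < s) (hr : 1 < r) {a : ℝ} (ha : 0 < a) :
    ∑' n, μ {ω | a * ((n + 1 : ℕ) * Real.logb r (n + 1 : ℕ)) < X n ω} = ⊤ := by
  set t : ℕ → ℝ := fun n => a * ((n + 1 : ℕ) * Real.logb r (n + 1 : ℕ))
  have hN : Tendsto (fun n : ℕ => ((n + 1 : ℕ) : ℝ)) atTop atTop :=
    tendsto_natCast_atTop_atTop.comp (tendsto_add_atTop_nat 1)
  have ht : Tendsto t atTop atTop :=
    (hN.atTop_mul_atTop₀ ((Real.tendsto_logb_atTop hr).comp hN)).const_mul_atTop ha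
  have hp : 0 < 1 - r⁻¹ := sub_pos.2 (inv_lt_one_of_one_lt₀ hr)
  have hlogr := Real.log_pos hr
  refine ENNReal.tsum_eq_top_of_ofReal_le (fun hsum => ?_) (fun n => by positivity)
    fun n => (h n).ofReal_le_measure_lt hs hr (t n)
  -- once `t n ≥ s`, the lower bound is this constant times `1 / ((n + 1) log (n + 1))`
  refine Real.not_summable_one_div_natCast_mul_log <| (summable_nat_add_iff 1).1 <|
    (summable_mul_left_iff (a := (1 - r⁻¹) * s * Real.log r / (r * a)) ?_).1 <|
    hsum.congr_atTop ?_
  · positivity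
  filter_upwards [ht.eventually_ge_atTop s] with n hn
  rw [max_eq_right hn]
  simp only [t, Real.logb] at hn ⊢
  field_simp

end HasPetersburgLaw

end

theorem petersburg_limsup_infinite
    {Ω : Type*} [MeasureSpace Ω] [IsProbabilityMeasure (ℙ : Measure Ω)]
    (X : ℕ → Ω → ℝ) (hX : ∀ i, Measurable (X i)) (p q s r : ℝ)
    (hp : 0 < p) (hp1 : p < 1) (hq : q = 1 - p) (hs : 0 < s) (hr : r = 1 / q)
    (hindep : iIndepFun X ℙ)
    (hlaw : ∀ i, ∀ k : ℕ, ℙ {ω | X i ω = s * r ^ k} = ENNReal.ofReal (p * q ^ k)) :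
    ∀ᵐ ω ∂ℙ, ∀ c : ℝ, ∃ᶠ n : ℕ in Filter.atTop,
      c < (∑ i ∈ Finset.range n, X i ω) / (n * Real.logb r n) := by
  have hr1 : 1 < r := hr ▸ one_lt_one_div (by linarith) (by linarith)
  obtain rfl : q = r⁻¹ := by rw [hr, one_div, inv_inv]
  obtain rfl : p = 1 - r⁻¹ := by linarith
  have hpos : ∀ᵐ ω ∂ℙ, ∀ i, 0 < X i ω :=
    ae_all_iff.2 fun i => HasPetersburgLaw.ae_pos (hlaw i) (hX i) hs hr1
  have hbig (m : ℕ) : ∀ᵐ ω ∂ℙ, ∃ᶠ n in atTop,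
      ((m : ℝ) + 1) * ((n + 1 : ℕ) * Real.logb r (n + 1 : ℕ)) < X n ω :=
    ae_frequently_mem_of_iIndepFun hX hindep (fun _ => measurableSet_Ioi)
      (HasPetersburgLaw.tsum_measure_mul_logb_lt_eq_top hlaw hs hr1 (by positivity))
  filter_upwards [hpos, ae_all_iff.2 hbig] with ω hpos hbig c
  obtain ⟨m, hcm⟩ := exists_nat_ge c
  refine (tendsto_add_atTop_nat 1).frequently
    (((hbig m).and_eventually (eventually_ge_atTop 1)).mono fun n ⟨hn, hn1⟩ => ?_)
  have hL : 0 < ((n + 1 : ℕ) : ℝ) * Real.logb r (n + 1 : ℕ) :=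
    mul_pos (by positivity) (Real.logb_pos hr1 (by norm_cast; omega))
  rw [lt_div_iff₀ hL]
  calc c * _ < ((m : ℝ) + 1) * _ := by gcongr; linarith
    _ < X n ω := hn
    _ ≤ ∑ i ∈ Finset.range (n + 1), X i ω :=
      Finset.single_le_sum (fun i _ => (hpos i).le) (Finset.self_mem_range_succ n)
end
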